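/- arXiv:math/0702177 — 2 statements merged into one kernel-verified Lean document; each statement's English description precedes it below -/
import Mathlib

section
/- Let (W,S) be a Coxeter system with s_0 evenly-laced. For any w ∈ W^+, identifying subscripts of R = {r_1,...,r_n} with subscripts of S \ {s_0} = {s_1,...,s_n}, the symmetrized descent set satisfies Des_R-hat(w) = Des_S(τ^{-1}(w)), where τ^{-1}(w) is the unique element of {w, w s_0} lying in W^{{s_0}} (the minimal coset representatives of W/W_{⟨s_0⟩}). For arbitrary s_0 one has the inclusion Des_S(τ^{-1}(w)) ⊆ Nasc_R-hat(w). -/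
open CoxeterSystem

namespace AltCox

variable {W : Type*} [Group W]

/-- Word length of `w` with respect to a generating set `A`:
the minimum length of a word in `A` whose product is `w`. -/
noncomputable def glen (A : Set W) (w : W) : ℕ :=
  sInf {k | ∃ l : List W, (∀ x ∈ l, x ∈ A) ∧ l.prod = w ∧ l.length = k}

variable {n : ℕ} {M : CoxeterMatrix (Fin (n + 1))} (cs : CoxeterSystem M W)

/-- The alternating subgroup `W⁺`: the kernel of the sign character, i.e. the
set of elements of even Coxeter length. -/
def alt : Subgroup W where
  carrier := {w | Even (cs.length w)}
  one_mem' := by simp [Nat.even_iff]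
  mul_mem' := by
    intro a b ha hb
    simp only [Set.mem_setOf_eq, Nat.even_iff] at *
    have := cs.length_mul_mod_two a b
    omega
  inv_mem' := by
    intro a ha
    simpa [cs.length_inv] using ha

/-- The generating set `R = {r_i = s₀ sᵢ : i ≠ 0}` of `W⁺`. -/
def Rset : Set W := {x | ∃ i : Fin (n + 1), i ≠ 0 ∧ x = cs.simple 0 * cs.simple i}

/-- The symmetrized generating set `R ∪ R⁻¹`. -/
def Rsym : Set W := Rset cs ∪ (Rset cs)⁻¹

/-- `ν w`: the minimum number of letters different from `s₀` among all words
in the simple reflections whose product is `w`. -/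
noncomputable def nu (w : W) : ℕ :=
  sInf {k | ∃ ω : List (Fin (n + 1)), cs.wordProd ω = w ∧
    (ω.filter (fun i => i ≠ 0)).length = k}

/-- `τ w` is the unique element of `{w, w s₀}` lying in `W⁺`. -/
noncomputable def tau (w : W) : W :=
  if Even (cs.length w) then w else w * cs.simple 0

/-- `s₀` is evenly laced: `m₀ᵢ` is even or infinite (encoded by `0`) for all `i ≠ 0`. -/
def EvenlyLaced (M : CoxeterMatrix (Fin (n + 1))) : Prop :=
  ∀ i : Fin (n + 1), i ≠ 0 → Even (M 0 i)

/-- The set of all reflections of `(W, S)`. -/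
def Tall : Set W := {t | cs.IsReflection t}

/-- The set `T̂` of reflections conjugate to some simple reflection other than `s₀`. -/
def That : Set W := {t | ∃ w : W, ∃ i : Fin (n + 1), i ≠ 0 ∧ t = w * cs.simple i * w⁻¹}

/-- The set of odd palindromes of `W⁺` with respect to `R`. -/
def Palin : Set W :=
  {p | ∃ l : List W, (∀ x ∈ l, x ∈ Rsym cs) ∧ Odd l.length ∧ l.reverse = l ∧ l.prod = p}

/-- The set of left-shortening palindromes of `w`. -/
noncomputable def PL (w : W) : Set W :=
  {p ∈ Palin cs | glen (Rsym cs) (p * w) < glen (Rsym cs) w}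

/-- The set of right-shortening palindromes of `w`. -/
noncomputable def PR (w : W) : Set W :=
  {p ∈ Palin cs | glen (Rsym cs) (w * p) < glen (Rsym cs) w}

/-- The right weak order on `(W⁺, R)`. -/
noncomputable def rweak (u w : W) : Prop :=
  Relation.ReflTransGen
    (fun a b => ∃ r ∈ Rsym cs, b = a * r ∧
      glen (Rsym cs) b = glen (Rsym cs) a + 1) u w

/-- The left weak order on `(W⁺, R)`. -/
noncomputable def lweak (u w : W) : Prop :=
  Relation.ReflTransGen
    (fun a b => ∃ r ∈ Rsym cs, b = r * a ∧
      glen (Rsym cs) b = glen (Rsym cs) a + 1) u w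

/-- The right strong order on `(W⁺, R)`. -/
noncomputable def rstrong (u w : W) : Prop :=
  Relation.ReflTransGen
    (fun a b => ∃ p ∈ Palin cs, b = a * p ∧
      glen (Rsym cs) a < glen (Rsym cs) b) u w

/-- The left strong order on `(W⁺, R)`. -/
noncomputable def lstrong (u w : W) : Prop :=
  Relation.ReflTransGen
    (fun a b => ∃ p ∈ Palin cs, b = p * a ∧
      glen (Rsym cs) a < glen (Rsym cs) b) u w

/-- The strong Bruhat order on a Coxeter system. -/
noncomputable def bruhatLE {B : Type*} {M' : CoxeterMatrix B} {W' : Type*} [Group W']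
    (cs' : CoxeterSystem M' W') (u w : W') : Prop :=
  Relation.ReflTransGen
    (fun a b => ∃ t, cs'.IsReflection t ∧ b = a * t ∧ cs'.length a < cs'.length b) u w

/-- The right weak order of a Coxeter system. -/
noncomputable def coxRweak {B : Type*} {M' : CoxeterMatrix B} {W' : Type*} [Group W']
    (cs' : CoxeterSystem M' W') (u w : W') : Prop :=
  Relation.ReflTransGen
    (fun a b => ∃ i, b = a * cs'.simple i ∧ cs'.length b = cs'.length a + 1) u w

/-- The standard parabolic subgroup `W_J` for `J ⊆ S`. -/
def parabolic (J : Set (Fin (n + 1))) : Subgroup W :=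
  Subgroup.closure (cs.simple '' J)

/-- The image `τ(J) = {s₀ sᵢ : sᵢ ∈ J, i ≠ 0}` of a subset `J ⊆ S` containing `s₀`. -/
def tauSet (J : Set (Fin (n + 1))) : Set W :=
  {x | ∃ i ∈ J, i ≠ 0 ∧ x = cs.simple 0 * cs.simple i}

/-- The set `W^J` of minimum-length coset representatives for `W/W_J`. -/
def minReps (J : Set (Fin (n + 1))) : Set W :=
  {w | ∀ i ∈ J, cs.length w < cs.length (w * cs.simple i)}


/-- The descent set of `v ∈ W` with respect to `S`, identified with subscripts. -/
def desS (v : W) : Set (Fin (n + 1)) :=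
  {i | cs.length (v * cs.simple i) < cs.length v}

/-- `τ⁻¹(w)`: the unique element of `{w, w s₀}` lying in `W^{{s₀}}`. -/
noncomputable def invTau (w : W) : W :=
  if cs.length w < cs.length (w * cs.simple 0) then w else w * cs.simple 0

/-- The symmetrized descent set of `w ∈ W⁺`, identified with subscripts. -/
def desHat (w : W) : Set (Fin (n + 1)) :=
  {i | i ≠ 0 ∧ (glen (Rsym cs) (w * (cs.simple 0 * cs.simple i)) < glen (Rsym cs) w ∨
    glen (Rsym cs) (w * (cs.simple 0 * cs.simple i)⁻¹) < glen (Rsym cs) w)}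

/-- The symmetrized weak descent (nonascent) set of `w ∈ W⁺`. -/
def nascHat (w : W) : Set (Fin (n + 1)) :=
  {i | i ≠ 0 ∧ (glen (Rsym cs) (w * (cs.simple 0 * cs.simple i)) ≤ glen (Rsym cs) w ∨
    glen (Rsym cs) (w * (cs.simple 0 * cs.simple i)⁻¹) ≤ glen (Rsym cs) w)}

/-!
On `W⁺` the `R ∪ R⁻¹`-length is `ν`, the least number of letters `≠ s₀` in an `S`-word:
each `r_i^{±1}` is `s₀ sᵢ` or `sᵢ s₀`, and conversely, inserting letters `s₀` turns every letter
`sᵢ ≠ s₀` of an even-length word into some `r_i^{±1}`. `ν` is unchanged by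
right multiplication with `s₀`, and does not increase from `v` to `v sᵢ` when `sᵢ` is a
descent of `v`: by the exchange condition a letter can be deleted from a word realizing `ν v`.
For `v = τ⁻¹(w)` the elements `w r_i` and `w r_i⁻¹` are `v sᵢ` and `v s₀ sᵢ` up to a right
factor `s₀`, which gives the inclusion. If `s₀` is evenly laced, `(-1) ^ ν` is a character,
so `ν (v sᵢ) ≠ ν v` for `i ≠ 0` and the inequality becomes strict; conversely, if `sᵢ` is an
ascent of `v`, then neither `v sᵢ` nor `v s₀ sᵢ` has smaller `ν`, because `v s₀` cannot have
both `s₀` and `sᵢ` as descents. The exchange condition itself comes from the usual action of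
`W` on `W × {±1}`, where `sᵢ` conjugates and flips the sign exactly at `sᵢ`.
-/

section Exchange

open scoped Classical

variable {B : Type*} {M : CoxeterMatrix B} (cs : CoxeterSystem M W)

local prefix:100 "s" => cs.simple
local prefix:100 "π" => cs.wordProd
local prefix:100 "ℓ" => cs.length

noncomputable def signedConj (i : B) : Equiv.Perm (W × ℤˣ) :=
  Function.Involutive.toPerm (fun x => (s i * x.1 * s i, if x.1 = s i then -x.2 else x.2))
    (by
      rintro ⟨t, ε⟩
      have hconj : s i * (s i * t * s i) * s i = t := by
        simp [mul_assoc, cs.simple_mul_simple_cancel_left]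
      have hfix : s i * t * s i = s i ↔ t = s i := by
        constructor
        · intro h; rw [← hconj, h]; simp
        · rintro rfl; simp
      by_cases ht : t = s i <;> simp [hconj, hfix, ht])

theorem signedConj_apply (i : B) (t : W) (ε : ℤˣ) :
    signedConj cs i (t, ε) = (s i * t * s i, if t = s i then -ε else ε) := rfl

theorem prod_map_signedConj (ω : List B) (t : W) (ε : ℤˣ) :
    (ω.map (signedConj cs)).prod (t, ε) =
      (π ω * t * (π ω)⁻¹, (-1) ^ (cs.rightInvSeq ω).count t * ε) := by
  induction ω generalizing t ε with
  | nil => simp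
  | cons i ω ih =>
    have hcond : π ω * t * (π ω)⁻¹ = s i ↔ (π ω)⁻¹ * s i * π ω = t := by
      constructor
      · intro h; rw [← h]; group
      · rintro rfl; group
    simp only [List.map_cons, List.prod_cons, Equiv.Perm.mul_apply, ih, signedConj_apply,
      cs.wordProd_cons, rightInvSeq, List.count_cons, hcond, beq_iff_eq]
    refine Prod.ext (by simp [mul_assoc]) ?_
    split_ifs <;> simp [pow_succ]

theorem alternatingWord_two_mul_add_two (i j : B) (p : ℕ) :
    alternatingWord i j (2 * p + 2) = alternatingWord i j (2 * p) ++ [i, j] := by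
  simp [alternatingWord_succ]

theorem prod_map_alternatingWord {G : Type*} [Monoid G] (f : B → G) (i j : B) (p : ℕ) :
    ((alternatingWord i j (2 * p)).map f).prod = (f i * f j) ^ p := by
  induction p with
  | zero => simp [alternatingWord]
  | succ p ih => simp [mul_add, alternatingWord_two_mul_add_two, ih, pow_succ]

theorem reverse_alternatingWord (i j : B) (p : ℕ) :
    (alternatingWord i j (2 * p)).reverse = alternatingWord j i (2 * p) := by
  induction p with
  | zero => simp [alternatingWord]
  | succ p ih =>
    rw [mul_add, mul_one, alternatingWord_two_mul_add_two, List.reverse_append, ih,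
      alternatingWord_succ', alternatingWord_succ']
    simp

theorem even_count_map_range_of_periodic {β : Type*} [BEq β] (g : ℕ → β) {m : ℕ}
    (hg : ∀ k, g (m + k) = g k) (b : β) : Even (((List.range (2 * m)).map g).count b) := by
  rw [two_mul, List.range_add, List.map_append, List.map_map, List.count_append]
  simp only [Function.comp_def, hg]
  exact ⟨_, rfl⟩

/-- The left inversion sequence of the reversed braid word is `k ↦ sⱼ (sᵢ sⱼ) ^ k`, which has
period `M i j`. -/
theorem even_count_rightInvSeq_alternatingWord (i j : B) (t : W) :
    Even ((cs.rightInvSeq (alternatingWord i j (2 * M i j))).count t) := by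
  set g : ℕ → W := fun k => s j * (s i * s j) ^ k
  have hlis :
      cs.leftInvSeq (alternatingWord j i (2 * M i j)) = (List.range (2 * M i j)).map g := by
    refine List.ext_getElem (by simp) fun k hk _ => ?_
    rw [cs.getElem_leftInvSeq_alternatingWord j i _ k (by simpa using hk),
      cs.prod_alternatingWord_eq_mul_pow]
    simp [g, show (2 * k + 1) / 2 = k by omega]
  rw [← reverse_alternatingWord, cs.rightInvSeq_reverse, List.count_reverse, hlis]
  exact even_count_map_range_of_periodic g (fun k => by simp [g, pow_add]) t

theorem isLiftable_signedConj : M.IsLiftable (signedConj cs) := by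
  intro i j
  rw [← prod_map_alternatingWord]
  ext1 ⟨t, ε⟩
  have hπ : π (alternatingWord i j (2 * M i j)) = 1 := by
    rw [wordProd, prod_map_alternatingWord, cs.simple_mul_simple_pow]
  rw [prod_map_signedConj, hπ, (even_count_rightInvSeq_alternatingWord cs i j t).neg_one_pow]
  simp

/-- Both sides are the sign component of `(t, 1)` moved by `π ω = π ω'` under the lift of
`signedConj`. -/
theorem neg_one_pow_count_rightInvSeq_eq {ω ω' : List B} (h : π ω = π ω') (t : W) :
    (-1 : ℤˣ) ^ (cs.rightInvSeq ω).count t = (-1) ^ (cs.rightInvSeq ω').count t := by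
  set ρ := cs.lift ⟨signedConj cs, isLiftable_signedConj cs⟩
  have hρ : ∀ ν : List B, ρ (π ν) = (ν.map (signedConj cs)).prod := fun ν => by
    rw [wordProd, map_list_prod, List.map_map]
    congr 1
    exact List.map_congr_left fun i _ => cs.lift_apply_simple (isLiftable_signedConj cs) i
  have := congrArg (fun f : Equiv.Perm (W × ℤˣ) => (f (t, 1)).2) ((hρ ω).symm.trans (h ▸ hρ ω'))
  simpa [prod_map_signedConj] using this

theorem simple_mem_rightInvSeq {ω : List B} {i : B} (h : ℓ (π ω * s i) < ℓ (π ω)) :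
    s i ∈ cs.rightInvSeq ω := by
  obtain ⟨ζ, hζ, hζπ⟩ := cs.exists_isReduced (π ω * s i)
  have hπ : π (ζ.concat i) = π ω := by
    rw [wordProd_concat, ← hζπ, cs.simple_mul_simple_cancel_right]
  have hnot : s i ∉ cs.rightInvSeq ζ := fun hmem => by
    have := (cs.isRightInversion_of_mem_rightInvSeq hζ hmem).2
    rw [← hζπ, cs.simple_mul_simple_cancel_right] at this
    omega
  have hcount : (cs.rightInvSeq (ζ.concat i)).count (s i) = 1 := by
    have hfix : MulAut.conj (s i) (s i) = s i := by simp
    have h0 : s i ∉ (cs.rightInvSeq ζ).map (MulAut.conj (s i)) := by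
      rw [List.mem_map]
      rintro ⟨x, hx, hxi⟩
      nth_rw 2 [← hfix] at hxi
      exact hnot ((MulAut.conj (s i)).injective hxi ▸ hx)
    rw [cs.rightInvSeq_concat, List.concat_eq_append, List.count_append,
      List.count_eq_zero.mpr h0]
    simp
  have := neg_one_pow_count_rightInvSeq_eq cs hπ (s i)
  rw [hcount, pow_one] at this
  rw [← List.count_pos_iff, Nat.pos_iff_ne_zero]
  intro h0
  simp [h0] at this

/-- The exchange condition. -/
theorem exists_wordProd_eraseIdx_eq {ω : List B} {i : B} (h : ℓ (π ω * s i) < ℓ (π ω)) :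
    ∃ k < ω.length, π (ω.eraseIdx k) = π ω * s i := by
  obtain ⟨k, hk, hget⟩ := List.getElem_of_mem (simple_mem_rightInvSeq cs h)
  refine ⟨k, by simpa using hk, ?_⟩
  rw [← cs.wordProd_mul_getD_rightInvSeq, List.getD_eq_getElem _ _ hk, hget]

theorem length_mul_simple_mul_simple_add_two_le {u : W} {i j : B} (hi : ℓ (u * s i) < ℓ u)
    (hj : ℓ (u * s j) < ℓ u) (hij : s i ≠ s j) : ℓ (u * s i * s j) + 2 ≤ ℓ u := by
  obtain ⟨ζ, hζ, hζπ⟩ := cs.exists_isReduced (u * s j)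
  have hπ : π (ζ ++ [j]) = u := by
    rw [wordProd_append, ← hζπ, wordProd_singleton, cs.simple_mul_simple_cancel_right]
  obtain ⟨k, hk, hkπ⟩ := exists_wordProd_eraseIdx_eq cs (ω := ζ ++ [j]) (hπ ▸ hi)
  rw [hπ] at hkπ
  rcases lt_or_eq_of_le (Nat.lt_succ_iff.mp (by simpa using hk)) with hlt | rfl
  · rw [List.eraseIdx_append_of_lt_length hlt, wordProd_append, wordProd_singleton,
      ← mul_left_inj (s j), cs.simple_mul_simple_cancel_right] at hkπ
    have hle := cs.length_wordProd_le (ζ.eraseIdx k)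
    rw [hkπ, List.length_eraseIdx_of_lt hlt] at hle
    have := cs.length_mul_simple u j
    have hζlen : ℓ (u * s j) = ζ.length := hζπ ▸ hζ
    omega
  · simp [List.eraseIdx_append_of_length_le, ← hζπ] at hkπ
    exact absurd hkπ.symm hij

end Exchange

local prefix:100 "s" => cs.simple
local prefix:100 "π" => cs.wordProd
local prefix:100 "ℓ" => cs.length

theorem glen_le_length {A : Set W} {l : List W} (hl : ∀ x ∈ l, x ∈ A) :
    glen A l.prod ≤ l.length :=
  Nat.sInf_le ⟨l, hl, rfl, rfl⟩

theorem exists_length_eq_glen {A : Set W} {w : W}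
    (h : ∃ l : List W, (∀ x ∈ l, x ∈ A) ∧ l.prod = w) :
    ∃ l : List W, (∀ x ∈ l, x ∈ A) ∧ l.prod = w ∧ l.length = glen A w := by
  obtain ⟨l, hl, rfl⟩ := h
  have hne :
      {k | ∃ l' : List W, (∀ x ∈ l', x ∈ A) ∧ l'.prod = l.prod ∧ l'.length = k}.Nonempty :=
    ⟨l.length, l, hl, rfl, rfl⟩
  exact Nat.sInf_mem hne

def nonzeroCount (ω : List (Fin (n + 1))) : ℕ := (ω.filter (fun i => i ≠ 0)).length

@[simp]
theorem nonzeroCount_nil : nonzeroCount ([] : List (Fin (n + 1))) = 0 := rfl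

@[simp]
theorem nonzeroCount_append (ω ω' : List (Fin (n + 1))) :
    nonzeroCount (ω ++ ω') = nonzeroCount ω + nonzeroCount ω' := by
  simp [nonzeroCount, List.filter_append]

@[simp]
theorem nonzeroCount_cons (i : Fin (n + 1)) (ω : List (Fin (n + 1))) :
    nonzeroCount (i :: ω) = (if i = 0 then 0 else 1) + nonzeroCount ω := by
  by_cases hi : i = 0 <;> simp [nonzeroCount, hi, add_comm]

theorem nonzeroCount_le_of_sublist {ω ω' : List (Fin (n + 1))} (h : ω.Sublist ω') :
    nonzeroCount ω ≤ nonzeroCount ω' :=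
  (h.filter _).length_le

theorem nu_le_nonzeroCount {w : W} {ω : List (Fin (n + 1))} (hω : π ω = w) :
    nu cs w ≤ nonzeroCount ω :=
  Nat.sInf_le ⟨ω, hω, rfl⟩

theorem exists_nonzeroCount_eq_nu (w : W) :
    ∃ ω : List (Fin (n + 1)), π ω = w ∧ nonzeroCount ω = nu cs w := by
  obtain ⟨ω, rfl⟩ := cs.wordProd_surjective w
  have hne : {k | ∃ ω' : List (Fin (n + 1)), π ω' = π ω ∧ nonzeroCount ω' = k}.Nonempty :=
    ⟨nonzeroCount ω, ω, rfl, rfl⟩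
  exact Nat.sInf_mem hne

theorem nu_mul_simple_zero (w : W) : nu cs (w * s 0) = nu cs w := by
  have hle : ∀ u : W, nu cs (u * s 0) ≤ nu cs u := fun u => by
    obtain ⟨ω, rfl, hω⟩ := exists_nonzeroCount_eq_nu cs u
    calc nu cs (π ω * s 0) ≤ nonzeroCount (ω ++ [0]) :=
          nu_le_nonzeroCount cs (by rw [wordProd_append, wordProd_singleton])
      _ = nu cs (π ω) := by simp [hω]
  have := hle (w * s 0)
  rw [cs.simple_mul_simple_cancel_right] at this
  exact le_antisymm (hle w) this

theorem nu_mul_simple_le {u : W} {i : Fin (n + 1)} (h : ℓ (u * s i) < ℓ u) :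
    nu cs (u * s i) ≤ nu cs u := by
  obtain ⟨ω, rfl, hω⟩ := exists_nonzeroCount_eq_nu cs u
  obtain ⟨k, -, hk⟩ := exists_wordProd_eraseIdx_eq cs h
  calc nu cs (π ω * s i) ≤ nonzeroCount (ω.eraseIdx k) := nu_le_nonzeroCount cs hk
    _ ≤ nonzeroCount ω := nonzeroCount_le_of_sublist (List.eraseIdx_sublist ω k)
    _ = nu cs (π ω) := hω

theorem nu_le_nu_mul_simple {u : W} {i : Fin (n + 1)} (h : ℓ u < ℓ (u * s i)) :
    nu cs u ≤ nu cs (u * s i) := by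
  simpa [mul_assoc] using nu_mul_simple_le cs (u := u * s i) (i := i) (by simpa [mul_assoc])

theorem simple_mul_simple_mem_alt (i j : Fin (n + 1)) : s i * s j ∈ alt cs := by
  change Even (ℓ (s i * s j))
  have := cs.length_mul_mod_two (s i) (s j)
  rw [cs.length_simple, cs.length_simple] at this
  rw [Nat.even_iff]
  omega

theorem simple_notMem_alt (i : Fin (n + 1)) : s i ∉ alt cs := by
  change ¬ Even (ℓ (s i))
  simp [cs.length_simple]

theorem Rsym_subset_alt : Rsym cs ⊆ alt cs := by
  rintro x (⟨i, -, rfl⟩ | ⟨i, -, hx⟩)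
  · exact simple_mul_simple_mem_alt cs 0 i
  · rw [← inv_inv x, hx]
    exact (alt cs).inv_mem (simple_mul_simple_mem_alt cs 0 i)

theorem simple_zero_mul_simple_mem_Rsym {i : Fin (n + 1)} (hi : i ≠ 0) :
    s 0 * s i ∈ Rsym cs :=
  Or.inl ⟨i, hi, rfl⟩

theorem simple_mul_simple_zero_mem_Rsym {i : Fin (n + 1)} (hi : i ≠ 0) :
    s i * s 0 ∈ Rsym cs :=
  Or.inr ⟨i, hi, by simp [mul_inv_rev]⟩

theorem exists_eq_of_mem_Rsym {x : W} (hx : x ∈ Rsym cs) :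
    ∃ i : Fin (n + 1), i ≠ 0 ∧ (x = s 0 * s i ∨ x = s i * s 0) := by
  rcases hx with ⟨i, hi, rfl⟩ | ⟨i, hi, hx⟩
  · exact ⟨i, hi, Or.inl rfl⟩
  · refine ⟨i, hi, Or.inr ?_⟩
    rw [← inv_inv x, hx]
    simp [mul_inv_rev]

theorem exists_Rsym_list (ω : List (Fin (n + 1))) :
    ∃ l : List W, (∀ x ∈ l, x ∈ Rsym cs) ∧ l.length = nonzeroCount ω ∧
      (l.prod = π ω ∨ l.prod * s 0 = π ω) := by
  induction ω using List.reverseRecOn with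
  | nil => exact ⟨[], by simp, rfl, Or.inl rfl⟩
  | append_singleton ω i ih =>
    obtain ⟨l, hl, hlen, hprod⟩ := ih
    rw [wordProd_append, wordProd_singleton]
    by_cases hi : i = 0
    · subst hi
      refine ⟨l, hl, by simp [hlen], ?_⟩
      rcases hprod with h | h
      · exact Or.inr (by rw [h])
      · exact Or.inl (by rw [← h, cs.simple_mul_simple_cancel_right])
    · rcases hprod with h | h
      · refine ⟨l ++ [s i * s 0], ?_, by simp [hlen, hi], Or.inr ?_⟩
        · simpa [or_imp, forall_and] using ⟨hl, simple_mul_simple_zero_mem_Rsym cs hi⟩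
        · simp [h, mul_assoc]
      · refine ⟨l ++ [s 0 * s i], ?_, by simp [hlen, hi], Or.inl ?_⟩
        · simpa [or_imp, forall_and] using ⟨hl, simple_zero_mul_simple_mem_Rsym cs hi⟩
        · simp [← h, mul_assoc]

theorem exists_nonzeroCount_eq_length {l : List W} (hl : ∀ x ∈ l, x ∈ Rsym cs) :
    ∃ ω : List (Fin (n + 1)), π ω = l.prod ∧ nonzeroCount ω = l.length := by
  induction l with
  | nil => exact ⟨[], rfl, rfl⟩
  | cons x l ih =>
    obtain ⟨ω, hω, hlen⟩ := ih fun y hy => hl y (List.mem_cons_of_mem x hy)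
    obtain ⟨i, hi, rfl | rfl⟩ := exists_eq_of_mem_Rsym cs (hl x List.mem_cons_self)
    · exact ⟨0 :: i :: ω, by simp [wordProd_cons, hω, mul_assoc], by simp [hi, hlen, add_comm]⟩
    · exact ⟨i :: 0 :: ω, by simp [wordProd_cons, hω, mul_assoc], by simp [hi, hlen, add_comm]⟩

theorem glen_Rsym_eq_nu {w : W} (hw : w ∈ alt cs) : glen (Rsym cs) w = nu cs w := by
  obtain ⟨ω, rfl, hω⟩ := exists_nonzeroCount_eq_nu cs w
  obtain ⟨l, hl, hlen, hprod⟩ := exists_Rsym_list cs ω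
  have hl_alt : l.prod ∈ alt cs := list_prod_mem fun x hx => Rsym_subset_alt cs (hl x hx)
  have hprod : l.prod = π ω := hprod.resolve_right fun h => by
    have := (alt cs).mul_mem ((alt cs).inv_mem hl_alt) (h ▸ hw : l.prod * s 0 ∈ alt cs)
    rw [inv_mul_cancel_left] at this
    exact simple_notMem_alt cs 0 this
  refine le_antisymm (hω ▸ hlen ▸ hprod ▸ glen_le_length hl) ?_
  obtain ⟨l', hl', hprod', hlen'⟩ := exists_length_eq_glen ⟨l, hl, hprod⟩
  obtain ⟨ω', hω', hcount⟩ := exists_nonzeroCount_eq_length cs hl'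
  exact hlen' ▸ hcount ▸ nu_le_nonzeroCount cs (hω'.trans hprod')

theorem length_invTau_lt (w : W) : ℓ (invTau cs w) < ℓ (invTau cs w * s 0) := by
  unfold invTau
  split_ifs with h
  · exact h
  · rw [cs.simple_mul_simple_cancel_right]
    have := cs.length_mul_simple_ne w 0
    omega

theorem eq_invTau_or (w : W) : w = invTau cs w ∨ w = invTau cs w * s 0 := by
  unfold invTau
  split_ifs
  · exact Or.inl rfl
  · exact Or.inr (cs.simple_mul_simple_cancel_right 0).symm

/-- Writing `w ∈ {v, v s₀}`, right multiplication by `r_i^{±1}` turns into right multiplication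
of `v` by `sᵢ` or `s₀ sᵢ`, up to a factor `s₀` that `ν` does not see. -/
theorem glen_mul_or_iff (P : ℕ → ℕ → Prop) {w v : W} (hw : w ∈ alt cs)
    (hv : w = v ∨ w = v * s 0) (i : Fin (n + 1)) :
    (P (glen (Rsym cs) (w * (s 0 * s i))) (glen (Rsym cs) w) ∨
        P (glen (Rsym cs) (w * (s 0 * s i)⁻¹)) (glen (Rsym cs) w)) ↔
      (P (nu cs (v * s i)) (nu cs v) ∨ P (nu cs (v * s 0 * s i)) (nu cs v)) := by
  have hr := simple_mul_simple_mem_alt cs 0 i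
  rw [glen_Rsym_eq_nu cs hw, glen_Rsym_eq_nu cs ((alt cs).mul_mem hw hr),
    glen_Rsym_eq_nu cs ((alt cs).mul_mem hw ((alt cs).inv_mem hr)), mul_inv_rev, cs.inv_simple,
    cs.inv_simple]
  rcases hv with rfl | rfl
  · rw [← mul_assoc, ← mul_assoc, nu_mul_simple_zero, or_comm]
  · rw [← mul_assoc, ← mul_assoc, nu_mul_simple_zero, nu_mul_simple_zero,
      cs.simple_mul_simple_cancel_right]

theorem simple_zero_notMem_desS {v : W} (hv : ℓ v < ℓ (v * s 0)) : 0 ∉ desS cs v :=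
  fun h => lt_asymm h hv

theorem desS_invTau_subset_nascHat {w : W} (hw : w ∈ alt cs) :
    desS cs (invTau cs w) ⊆ nascHat cs w := fun i hi =>
  ⟨fun h0 => simple_zero_notMem_desS cs (length_invTau_lt cs w) (h0 ▸ hi),
    (glen_mul_or_iff cs (· ≤ ·) hw (eq_invTau_or cs w) i).mpr (Or.inl (nu_mul_simple_le cs hi))⟩

/-- `w ↦ (-1) ^ ν w`, a character because every `m₀ᵢ` is even. -/
noncomputable def nonzeroSign (hEL : EvenlyLaced M) : W →* ℤˣ :=
  cs.lift ⟨fun i => if i = 0 then 1 else -1, fun i j => by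
    by_cases hi : i = 0 <;> by_cases hj : j = 0
    · simp [hi, hj]
    · subst hi; simpa [hj] using (hEL j hj).neg_one_pow
    · subst hj; simpa [hi, M.symmetric i 0] using (hEL i hi).neg_one_pow
    · simp [hi, hj]⟩

theorem nonzeroSign_simple (hEL : EvenlyLaced M) (i : Fin (n + 1)) :
    nonzeroSign cs hEL (s i) = if i = 0 then 1 else -1 :=
  cs.lift_apply_simple _ i

theorem nonzeroSign_wordProd (hEL : EvenlyLaced M) (ω : List (Fin (n + 1))) :
    nonzeroSign cs hEL (π ω) = (-1) ^ nonzeroCount ω := by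
  induction ω with
  | nil => simp
  | cons i ω ih =>
    by_cases hi : i = 0 <;> simp [wordProd_cons, nonzeroSign_simple, ih, hi, pow_add]

theorem nonzeroSign_eq_neg_one_pow_nu (hEL : EvenlyLaced M) (w : W) :
    nonzeroSign cs hEL w = (-1) ^ nu cs w := by
  obtain ⟨ω, rfl, hω⟩ := exists_nonzeroCount_eq_nu cs w
  rw [← hω, nonzeroSign_wordProd]

theorem simple_zero_ne_simple (hEL : EvenlyLaced M) {i : Fin (n + 1)} (hi : i ≠ 0) :
    s 0 ≠ s i := fun h => by
  simpa [nonzeroSign_simple, hi] using congrArg (nonzeroSign cs hEL) h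

theorem nu_mul_simple_ne (hEL : EvenlyLaced M) {i : Fin (n + 1)} (hi : i ≠ 0) (u : W) :
    nu cs (u * s i) ≠ nu cs u := fun h => by
  have := map_mul (nonzeroSign cs hEL) u (s i)
  rw [nonzeroSign_simple, if_neg hi, nonzeroSign_eq_neg_one_pow_nu,
    nonzeroSign_eq_neg_one_pow_nu, h, mul_neg_one] at this
  rcases neg_one_pow_eq_or ℤˣ (nu cs u) with h' | h' <;> rw [h'] at this <;> simp at this

theorem nu_le_nu_mul_simple_zero_mul_simple (hEL : EvenlyLaced M) {v : W} {i : Fin (n + 1)}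
    (hi : i ≠ 0) (hv0 : ℓ v < ℓ (v * s 0)) (hvi : ℓ v < ℓ (v * s i)) :
    nu cs v ≤ nu cs (v * s 0 * s i) := by
  rw [← nu_mul_simple_zero cs v]
  refine nu_le_nu_mul_simple cs (lt_of_not_ge fun h => ?_)
  have h2 := length_mul_simple_mul_simple_add_two_le cs (u := v * s 0) (i := 0) (j := i)
    (by rwa [cs.simple_mul_simple_cancel_right]) (lt_of_le_of_ne h (cs.length_mul_simple_ne _ i))
    (simple_zero_ne_simple cs hEL hi)
  rw [cs.simple_mul_simple_cancel_right] at h2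
  have := cs.length_mul_simple v 0
  omega

theorem mem_desS_iff (hEL : EvenlyLaced M) {v : W} (hv0 : ℓ v < ℓ (v * s 0)) (i : Fin (n + 1)) :
    i ∈ desS cs v ↔ i ≠ 0 ∧ (nu cs (v * s i) < nu cs v ∨ nu cs (v * s 0 * s i) < nu cs v) := by
  constructor
  · intro hi
    have hi0 : i ≠ 0 := fun h0 => simple_zero_notMem_desS cs hv0 (h0 ▸ hi)
    exact ⟨hi0, Or.inl (lt_of_le_of_ne (nu_mul_simple_le cs hi) (nu_mul_simple_ne cs hEL hi0 v))⟩
  · rintro ⟨hi0, hlt⟩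
    by_contra hnot
    have hvi : ℓ v < ℓ (v * s i) :=
      lt_of_le_of_ne (not_lt.mp hnot) (cs.length_mul_simple_ne v i).symm
    have := nu_le_nu_mul_simple cs hvi
    have := nu_le_nu_mul_simple_zero_mul_simple cs hEL hi0 hv0 hvi
    omega

theorem desHat_eq_desS_invTau (hEL : EvenlyLaced M) {w : W} (hw : w ∈ alt cs) :
    desHat cs w = desS cs (invTau cs w) := by
  ext i
  rw [mem_desS_iff cs hEL (length_invTau_lt cs w)]
  exact and_congr_right fun _ => glen_mul_or_iff cs (· < ·) hw (eq_invTau_or cs w) i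

/-- For arbitrary `s₀`, `Des_S(τ⁻¹(w)) ⊆ Nasc-hat_R(w)`; when `s₀` is evenly
laced, `Des-hat_R(w) = Des_S(τ⁻¹(w))`. -/
theorem statement13 :
    (∀ w ∈ alt cs, desS cs (invTau cs w) ⊆ nascHat cs w) ∧
    (EvenlyLaced M → ∀ w ∈ alt cs, desHat cs w = desS cs (invTau cs w)) :=
  ⟨fun _ => desS_invTau_subset_nascHat cs, fun hEL _ => desHat_eq_desS_invTau cs hEL⟩

end AltCox
end

section
/- Let (W,S) be a Coxeter system with S = {s_0,...,s_n} in which s_0 is a leaf node, i.e., m_{0i} = 2 for i = 2,...,n (m_{01} arbitrary). Then W^+ is generated by R = {r_i = s_0 s_i : i = 1,...,n} and has the nearly-Coxeter presentation ⟨r_1,...,r_n : r_1^{m_{01}} = r_i^2 = (r_i r_j)^{m_{ij}} = e for 2 ≤ i, and 1 ≤ i < j ≤ n⟩, where s_1 is the unique neighbor of s_0 in the Coxeter diagram. -/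
open CoxeterSystem

namespace AltCox

variable {W : Type*} [Group W]

variable {n : ℕ} {M : CoxeterMatrix (Fin (n + 1))} (cs : CoxeterSystem M W)

/-- The defining relations of the nearly Coxeter presentation of `W⁺` when `s₀`
is a leaf with unique neighbor `s₁`:
`r₁^{m₀₁} = rᵢ² = (rᵢ rⱼ)^{mᵢⱼ} = e`. -/
def leafRels (M : CoxeterMatrix (Fin (n + 1))) :
    Set (FreeGroup {i : Fin (n + 1) // i ≠ 0}) :=
  {g | (∃ i : {i : Fin (n + 1) // i ≠ 0}, i.1 = 1 ∧
          g = (FreeGroup.of i) ^ (M 0 1)) ∨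
       (∃ i : {i : Fin (n + 1) // i ≠ 0}, i.1 ≠ 1 ∧ g = (FreeGroup.of i) ^ 2) ∨
       (∃ i j : {i : Fin (n + 1) // i ≠ 0}, i.1 < j.1 ∧
          g = (FreeGroup.of i * FreeGroup.of j) ^ (M i.1 j.1))}


/-! ### Auxiliary material -/

section Aux

private lemma rel_one {r : FreeGroup {i : Fin (n + 1) // i ≠ 0}} (h : r ∈ leafRels M) :
    PresentedGroup.mk (leafRels M) r = 1 :=
  (QuotientGroup.eq_one_iff r).mpr (Subgroup.subset_normalClosure h)

private lemma relB {i : {i : Fin (n + 1) // i ≠ 0}} (h : i.1 = 1) :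
    (PresentedGroup.of (rels := leafRels M) i) ^ (M 0 1) = 1 := by
  have := rel_one (M := M) (Or.inl ⟨i, h, rfl⟩)
  rwa [map_pow] at this

private lemma relA {i : {i : Fin (n + 1) // i ≠ 0}} (h : i.1 ≠ 1) :
    (PresentedGroup.of (rels := leafRels M) i) ^ 2 = 1 := by
  have := rel_one (M := M) (Or.inr (Or.inl ⟨i, h, rfl⟩))
  rwa [map_pow] at this

private lemma relC {i j : {i : Fin (n + 1) // i ≠ 0}} (h : i.1 < j.1) :
    (PresentedGroup.of (rels := leafRels M) i * PresentedGroup.of j) ^ (M i.1 j.1) = 1 := by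
  have := rel_one (M := M) (Or.inr (Or.inr ⟨i, j, h, rfl⟩))
  rwa [map_pow, map_mul] at this

/-- `(x*y)^m = x * (y*x)^m * x⁻¹`. -/
private lemma swap_pow {G : Type*} [Group G] (x y : G) (m : ℕ) :
    (x * y) ^ m = x * (y * x) ^ m * x⁻¹ := by
  have : x * y = x * (y * x) * x⁻¹ := by group
  rw [this, conj_pow]

private lemma relC' {i j : {i : Fin (n + 1) // i ≠ 0}} (h : i ≠ j) :
    (PresentedGroup.of (rels := leafRels M) i * PresentedGroup.of j) ^ (M i.1 j.1) = 1 := by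
  rcases lt_or_gt_of_ne (fun hh => h (Subtype.ext hh)) with hlt | hgt
  · exact relC hlt
  · rw [swap_pow, M.symmetric i.1 j.1, relC hgt]
    group

private lemma relD (hleaf : ∀ i : Fin (n + 1), i ≠ 0 → i ≠ 1 → M 0 i = 2)
    (i : {i : Fin (n + 1) // i ≠ 0}) :
    (PresentedGroup.of (rels := leafRels M) i) ^ (M 0 i.1) = 1 := by
  by_cases h : i.1 = 1
  · rw [h]; exact relB h
  · rw [hleaf i.1 i.2 h]; exact relA h

private lemma inv_of_eq {i : {i : Fin (n + 1) // i ≠ 0}} (h : i.1 ≠ 1) :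
    (PresentedGroup.of (rels := leafRels M) i)⁻¹ = PresentedGroup.of i := by
  have h2 := relA (M := M) h
  rw [pow_two] at h2
  exact inv_eq_of_mul_eq_one_right h2

private lemma relE {i j : {i : Fin (n + 1) // i ≠ 0}} (h : i ≠ j) :
    ((PresentedGroup.of (rels := leafRels M) i)⁻¹ * PresentedGroup.of j) ^ (M i.1 j.1) = 1 := by
  by_cases hi : i.1 = 1
  · have hj : j.1 ≠ 1 := fun hh => h (Subtype.ext (hi.trans hh.symm))
    rw [← inv_of_eq hj, ← mul_inv_rev, inv_pow, M.symmetric i.1 j.1,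
      relC' (fun hh => h hh.symm), inv_one]
  · rw [inv_of_eq hi]
    exact relC' h

private lemma alpha_lift : ∀ r ∈ leafRels M,
    FreeGroup.lift (fun i : {i : Fin (n + 1) // i ≠ 0} =>
      (PresentedGroup.of (rels := leafRels M) i)⁻¹) r = 1 := by
  rintro r (⟨i, hi, rfl⟩ | ⟨i, hi, rfl⟩ | ⟨i, j, hij, rfl⟩)
  · rw [map_pow, FreeGroup.lift_apply_of, inv_pow, relB hi, inv_one]
  · rw [map_pow, FreeGroup.lift_apply_of, inv_pow, relA hi, inv_one]
  · have hne : j ≠ i := fun hh => absurd hij (by rw [hh]; exact lt_irrefl _)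
    rw [map_pow, map_mul, FreeGroup.lift_apply_of, FreeGroup.lift_apply_of, ← mul_inv_rev, inv_pow,
      M.symmetric i.1 j.1, relC' hne, inv_one]

/-- The automorphism of the presented group inverting every generator. -/
private def alphaHom (M : CoxeterMatrix (Fin (n + 1))) :
    PresentedGroup (leafRels M) →* PresentedGroup (leafRels M) :=
  PresentedGroup.toGroup alpha_lift

private lemma alphaHom_of (i : {i : Fin (n + 1) // i ≠ 0}) :
    alphaHom M (PresentedGroup.of i) = (PresentedGroup.of i)⁻¹ :=
  PresentedGroup.toGroup.of alpha_lift

private lemma alpha_alpha (g : PresentedGroup (leafRels M)) :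
    alphaHom M (alphaHom M g) = g := by
  have : (alphaHom M).comp (alphaHom M) = MonoidHom.id _ := by
    apply PresentedGroup.ext
    intro i
    simp [alphaHom_of, map_inv]
  calc alphaHom M (alphaHom M g) = ((alphaHom M).comp (alphaHom M)) g := rfl
    _ = g := by rw [this]; rfl

private def alphaEquiv (M : CoxeterMatrix (Fin (n + 1))) : MulAut (PresentedGroup (leafRels M)) :=
  { toFun := alphaHom M
    invFun := alphaHom M
    left_inv := alpha_alpha
    right_inv := alpha_alpha
    map_mul' := map_mul _ }

private lemma alphaEquiv_sq : alphaEquiv M * alphaEquiv M = 1 := by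
  ext g
  exact alpha_alpha g

/-- The action of `ℤˣ ≅ C₂` on the presented group. -/
private def toAut (M : CoxeterMatrix (Fin (n + 1))) :
    ℤˣ →* MulAut (PresentedGroup (leafRels M)) where
  toFun u := if u = 1 then 1 else alphaEquiv M
  map_one' := if_pos rfl
  map_mul' a b := by
    have hne : (-1 : ℤˣ) ≠ 1 := by decide
    rcases Int.units_eq_one_or a with rfl | rfl <;>
      rcases Int.units_eq_one_or b with rfl | rfl <;>
      simp [hne, alphaEquiv_sq]

private lemma toAut_neg_one (g : PresentedGroup (leafRels M)) :
    toAut M (-1) g = alphaHom M g := by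
  have hne : (-1 : ℤˣ) ≠ 1 := by decide
  simp [toAut, hne, alphaEquiv]

/-- The image of the simple reflections in the semidirect product
`PresentedGroup (leafRels M) ⋊ C₂`. -/
private noncomputable def fH (M : CoxeterMatrix (Fin (n + 1))) (i : Fin (n + 1)) :
    PresentedGroup (leafRels M) ⋊[toAut M] ℤˣ :=
  ⟨if h : i = 0 then 1 else (PresentedGroup.of (rels := leafRels M) ⟨i, h⟩)⁻¹, -1⟩

private lemma fH_mul (i j : Fin (n + 1)) :
    fH M i * fH M j = SemidirectProduct.inl
      ((if h : i = 0 then 1 else (PresentedGroup.of (rels := leafRels M) ⟨i, h⟩)⁻¹) *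
        alphaHom M (if h : j = 0 then 1 else (PresentedGroup.of (rels := leafRels M) ⟨j, h⟩)⁻¹)) := by
  ext
  · simp [fH, SemidirectProduct.mul_left, toAut_neg_one]
  · simp [fH, SemidirectProduct.mul_right]

private lemma fH_liftable (hleaf : ∀ i : Fin (n + 1), i ≠ 0 → i ≠ 1 → M 0 i = 2) :
    M.IsLiftable (fH M) := by
  intro i j
  rw [fH_mul]
  rw [← map_pow, show (1 : PresentedGroup (leafRels M) ⋊[toAut M] ℤˣ) =
    SemidirectProduct.inl 1 from (map_one _).symm]
  congr 1
  by_cases hi : i = 0 <;> by_cases hj : j = 0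
  · subst hi; subst hj; simp
  · subst hi
    rw [dif_pos rfl, dif_neg hj, map_inv, alphaHom_of, inv_inv, one_mul]
    exact relD hleaf ⟨j, hj⟩
  · subst hj
    rw [dif_pos rfl, dif_neg hi, map_one, mul_one, inv_pow, M.symmetric i 0,
      relD hleaf ⟨i, hi⟩, inv_one]
  · rw [dif_neg hi, dif_neg hj, map_inv, alphaHom_of, inv_inv]
    by_cases hij : i = j
    · subst hij
      simp
    · exact relE (fun hh => hij (congrArg Subtype.val hh))

private lemma phi_lift (hleaf : ∀ i : Fin (n + 1), i ≠ 0 → i ≠ 1 → M 0 i = 2) :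
    ∀ r ∈ leafRels M,
      FreeGroup.lift (fun i : {i : Fin (n + 1) // i ≠ 0} =>
        cs.simple 0 * cs.simple i.1) r = 1 := by
  have comm0 : ∀ k : Fin (n + 1), k ≠ 0 → k ≠ 1 →
      cs.simple 0 * cs.simple k = cs.simple k * cs.simple 0 := by
    intro k hk0 hk1
    have h2 : (cs.simple 0 * cs.simple k) ^ 2 = 1 := by
      rw [← hleaf k hk0 hk1]; exact cs.simple_mul_simple_pow 0 k
    rw [pow_two] at h2
    calc cs.simple 0 * cs.simple k = (cs.simple 0 * cs.simple k)⁻¹ :=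
          (inv_eq_of_mul_eq_one_right h2).symm
      _ = cs.simple k * cs.simple 0 := by rw [mul_inv_rev, cs.inv_simple, cs.inv_simple]
  rintro r (⟨i, hi, rfl⟩ | ⟨i, hi, rfl⟩ | ⟨i, j, hij, rfl⟩)
  · rw [map_pow, FreeGroup.lift_apply_of, hi]
    exact cs.simple_mul_simple_pow 0 1
  · rw [map_pow, FreeGroup.lift_apply_of, ← hleaf i.1 i.2 hi]
    exact cs.simple_mul_simple_pow 0 i.1
  · rw [map_pow, map_mul, FreeGroup.lift_apply_of, FreeGroup.lift_apply_of]
    have hj1 : j.1 ≠ 1 := by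
      intro hh
      have h1 : (i.1 : ℕ) ≠ 0 := fun hc => i.2 (Fin.ext (by simpa using hc))
      have h2 : (i.1 : ℕ) < (j.1 : ℕ) := hij
      have h3 : ((j.1 : Fin (n + 1)) : ℕ) = 1 % (n + 1) := by rw [hh]; exact Fin.val_one' _
      have h4 : 1 % (n + 1) ≤ 1 := Nat.mod_le 1 (n + 1)
      omega
    have : cs.simple 0 * cs.simple i.1 * (cs.simple 0 * cs.simple j.1)
        = cs.simple 0 * (cs.simple i.1 * cs.simple j.1) * (cs.simple 0)⁻¹ := by
      rw [comm0 j.1 j.2 hj1, cs.inv_simple]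
      group
    rw [this, conj_pow, cs.simple_mul_simple_pow i.1 j.1]
    group

/-- Products of evenly many simple reflections lie in the closure of `Rset`. -/
private lemma even_word_mem : ∀ (ω : List (Fin (n + 1))), Even ω.length →
    cs.wordProd ω ∈ Subgroup.closure (Rset cs)
  | [], _ => by simpa [CoxeterSystem.wordProd] using one_mem _
  | [i], h => by simp [Nat.even_iff] at h
  | (i :: j :: t), h => by
    have mem1 : ∀ k : Fin (n + 1), cs.simple 0 * cs.simple k ∈ Subgroup.closure (Rset cs) := by
      intro k
      by_cases hk : k = 0
      · subst hk
        rw [cs.simple_mul_simple_self]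
        exact one_mem _
      · exact Subgroup.subset_closure ⟨k, hk, rfl⟩
    have hpair : cs.simple i * cs.simple j ∈ Subgroup.closure (Rset cs) := by
      have : (cs.simple 0 * cs.simple i)⁻¹ * (cs.simple 0 * cs.simple j)
          = cs.simple i * cs.simple j := by
        rw [mul_inv_rev, cs.inv_simple, cs.inv_simple, mul_assoc,
          ← mul_assoc (cs.simple 0), cs.simple_mul_simple_self, one_mul]
      rw [← this]
      exact mul_mem (inv_mem (mem1 i)) (mem1 j)
    have ht : Even t.length := by
      simp only [List.length_cons, Nat.even_iff] at h ⊢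
      omega
    have := even_word_mem t ht
    rw [cs.wordProd_cons, cs.wordProd_cons, ← mul_assoc]
    exact mul_mem hpair this

private lemma closure_Rset_eq_alt : Subgroup.closure (Rset cs) = alt cs := by
  apply le_antisymm
  · rw [Subgroup.closure_le]
    rintro x ⟨i, hi, rfl⟩
    show Even (cs.length (cs.simple 0 * cs.simple i))
    have := cs.length_mul_mod_two (cs.simple 0) (cs.simple i)
    rw [cs.length_simple, cs.length_simple] at this
    rw [Nat.even_iff]
    omega
  · intro w hw
    have hw' : Even (cs.length w) := hw
    obtain ⟨ω, hred, rfl⟩ := cs.exists_reduced_word' w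
    exact even_word_mem cs ω (by rwa [← hred])

end Aux

/-- When `s₀` is a leaf node (`m₀ᵢ = 2` for `i ≥ 2`), `W⁺` is generated by
`R = {rᵢ = s₀ sᵢ}` and has the nearly Coxeter presentation
`⟨r₁,…,rₙ : r₁^{m₀₁} = rᵢ² = (rᵢ rⱼ)^{mᵢⱼ} = e⟩`. -/
theorem statement17 (hleaf : ∀ i : Fin (n + 1), i ≠ 0 → i ≠ 1 → M 0 i = 2) :
    Subgroup.closure (Rset cs) = alt cs ∧
    ∃ φ : PresentedGroup (leafRels M) →* W,
      Function.Injective φ ∧ φ.range = alt cs ∧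
      ∀ i : {i : Fin (n + 1) // i ≠ 0},
        φ (PresentedGroup.of i) = cs.simple 0 * cs.simple i.1 := by
  classical
  set φ : PresentedGroup (leafRels M) →* W := PresentedGroup.toGroup (phi_lift cs hleaf) with hφ
  have hφof : ∀ i : {i : Fin (n + 1) // i ≠ 0},
      φ (PresentedGroup.of i) = cs.simple 0 * cs.simple i.1 := fun i =>
    PresentedGroup.toGroup.of (phi_lift cs hleaf)
  refine ⟨closure_Rset_eq_alt cs, φ, ?_, ?_, hφof⟩
  · -- injectivity
    set fW : W →* PresentedGroup (leafRels M) ⋊[toAut M] ℤˣ :=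
      cs.lift ⟨fH M, fH_liftable hleaf⟩ with hfW
    have hfWs : ∀ i : Fin (n + 1), fW (cs.simple i) = fH M i := fun i =>
      cs.lift_apply_simple (fH_liftable hleaf) i
    have hcomp : fW.comp φ = SemidirectProduct.inl := by
      apply PresentedGroup.ext
      intro i
      rw [MonoidHom.comp_apply, hφof, map_mul, hfWs, hfWs, fH_mul, dif_pos rfl,
        dif_neg i.2, map_inv, alphaHom_of, inv_inv, one_mul]
    intro x y hxy
    have hx : (SemidirectProduct.inl x : PresentedGroup (leafRels M) ⋊[toAut M] ℤˣ)
        = SemidirectProduct.inl y := by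
      rw [← hcomp]
      simp only [MonoidHom.comp_apply, hxy]
    exact SemidirectProduct.inl_injective hx
  · -- range
    rw [MonoidHom.range_eq_map, ← PresentedGroup.closure_range_of (leafRels M),
      MonoidHom.map_closure, ← closure_Rset_eq_alt cs]
    congr 1
    ext x
    constructor
    · rintro ⟨_, ⟨i, rfl⟩, rfl⟩
      exact ⟨i.1, i.2, hφof i⟩
    · rintro ⟨i, hi, rfl⟩
      exact ⟨PresentedGroup.of ⟨i, hi⟩, ⟨⟨i, hi⟩, rfl⟩, hφof ⟨i, hi⟩⟩

end AltCox
end
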